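/- (Normal equation for the A₂ update.) Fix real matrices X_k (N×N) and R_k (p×p) for k = 1,…,K, a matrix A₁ (N×p), and constants λ_A ≥ 0, λ_e ≥ 0, ρ > 0. Let G(A) = ½·Σ_k ‖X_k − A₁·R_k·Aᵀ‖_F² + ½·λ_A·‖A‖_F² + ½·λ_e·‖A₁ − A‖_F² + (1/ρ)·‖A‖_F². Then the p×p matrix H = Σ_k R_kᵀ·A₁ᵀ·A₁·R_k + (λ_A + λ_e + 2/ρ)·I_p is positive definite (hence invertible), and A₂* = (Σ_k X_kᵀ·A₁·R_k + λ_e·A₁)·H⁻¹ is the unique global minimizer of G. -/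

import Mathlib

/-!
Writing `‖M‖_F² = tr(MᵀM)` and expanding, the objective is a constant plus the quadratic
`½ tr(Aᵀ A H) − tr(Aᵀ B)` with `H` the matrix of the statement, which is positive definite as a
sum of Gram matrices and a positive multiple of `I`. Completing the square at `A* = B H⁻¹`
(where `A* H = B`) gives `G(A) − G(A*) = ½ tr((A − A*)ᵀ (A − A*) H)`, and the right side is a
sum of `H`-norms of the rows of `A − A*`, hence positive unless `A = A*`.
-/

open Matrix

/-- Frobenius norm of a real matrix. -/
noncomputable def frobNorm {m n : ℕ} (M : Matrix (Fin m) (Fin n) ℝ) : ℝ :=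
  Real.sqrt (∑ i, ∑ j, M i j ^ 2)

/-- The ALS subproblem objective in `A₂`. -/
noncomputable def alsObjA₂ {N p K : ℕ}
    (X : Fin K → Matrix (Fin N) (Fin N) ℝ) (R : Fin K → Matrix (Fin p) (Fin p) ℝ)
    (A₁ : Matrix (Fin N) (Fin p) ℝ) (lamA lamE ρ : ℝ)
    (A : Matrix (Fin N) (Fin p) ℝ) : ℝ :=
  (1 / 2) * ∑ k, frobNorm (X k - A₁ * R k * Aᵀ) ^ 2
    + (1 / 2) * lamA * frobNorm A ^ 2
    + (1 / 2) * lamE * frobNorm (A₁ - A) ^ 2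
    + (1 / ρ) * frobNorm A ^ 2

section TraceQuadratic

variable {m n ι : Type*} [Fintype m] [Fintype n]

lemma trace_transpose_mul_comm (A B : Matrix m n ℝ) : trace (Aᵀ * B) = trace (Bᵀ * A) := by
  rw [← trace_transpose (Aᵀ * B), transpose_mul, transpose_transpose]

lemma posDef_sum_transpose_mul_self_add_smul_one [DecidableEq n] (M : ι → Matrix m n ℝ)
    (s : Finset ι) {c : ℝ} (hc : 0 < c) :
    (∑ k ∈ s, (M k)ᵀ * M k + c • (1 : Matrix n n ℝ)).PosDef :=
  PosDef.posSemidef_add (posSemidef_sum s fun k _ => posSemidef_conjTranspose_mul_self (M k))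
    (PosDef.one.smul hc)

lemma Matrix.PosDef.trace_transpose_mul_self_mul_pos {H : Matrix n n ℝ} (hH : H.PosDef)
    {D : Matrix m n ℝ} (hD : D ≠ 0) : 0 < trace (Dᵀ * D * H) := by
  have hdiag : ∀ i, (D * H * Dᵀ) i i = D i ⬝ᵥ (H *ᵥ D i) := fun i => by
    simp only [mul_apply, transpose_apply, dotProduct, mulVec, Finset.sum_mul]
    exact Finset.sum_comm.trans (Finset.sum_congr rfl fun _ _ => by
      simp only [Finset.mul_sum]; exact Finset.sum_congr rfl fun _ _ => by ring)
  obtain ⟨i, hi⟩ : ∃ i, D i ≠ 0 := by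
    by_contra! h
    exact hD (funext h)
  rw [Matrix.mul_assoc, trace_mul_comm, trace]
  refine Finset.sum_pos' (fun j _ => (hH.posSemidef.mul_mul_conjTranspose_same D).diag_nonneg)
    ⟨i, Finset.mem_univ i, ?_⟩
  simpa [hdiag] using hH.dotProduct_mulVec_pos hi

noncomputable def traceQuadratic (H : Matrix n n ℝ) (B A : Matrix m n ℝ) : ℝ :=
  (1 / 2) * trace (Aᵀ * A * H) - trace (Aᵀ * B)

lemma traceQuadratic_sub_of_mul_eq {H : Matrix n n ℝ} (hH : Hᵀ = H) {A' B : Matrix m n ℝ}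
    (hA' : A' * H = B) (A : Matrix m n ℝ) :
    traceQuadratic H B A - traceQuadratic H B A' = (1 / 2) * trace ((A - A')ᵀ * (A - A') * H) := by
  have hcross : trace (A'ᵀ * A * H) = trace (Aᵀ * A' * H) := by
    rw [← trace_transpose (A'ᵀ * A * H)]
    simp only [transpose_mul, transpose_transpose, hH]
    rw [trace_mul_comm]
  subst hA'
  simp only [traceQuadratic, transpose_sub, Matrix.sub_mul, Matrix.mul_sub, trace_sub,
    Matrix.mul_assoc] at *
  linear_combination (1 / 2) * hcross

theorem traceQuadratic_lt_of_ne [DecidableEq n] {H : Matrix n n ℝ} (hH : H.PosDef)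
    (B : Matrix m n ℝ) {A : Matrix m n ℝ} (hA : A ≠ B * H⁻¹) :
    traceQuadratic H B (B * H⁻¹) < traceQuadratic H B A := by
  have hsymm : Hᵀ = H := by simpa using hH.isHermitian.eq
  have hcrit : B * H⁻¹ * H = B :=
    nonsing_inv_mul_cancel_right H B ((isUnit_iff_isUnit_det H).mp hH.isUnit)
  have := traceQuadratic_sub_of_mul_eq hsymm hcrit A
  have := hH.trace_transpose_mul_self_mul_pos (sub_ne_zero.mpr hA)
  linarith

end TraceQuadratic

lemma frobNorm_sq {m n : ℕ} (M : Matrix (Fin m) (Fin n) ℝ) :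
    frobNorm M ^ 2 = trace (Mᵀ * M) := by
  rw [frobNorm, Real.sq_sqrt (by positivity), trace]
  simp only [diag, mul_apply, transpose_apply]
  rw [Finset.sum_comm]
  simp [sq]

lemma frobNorm_sq_sub_mul_transpose {N p : ℕ} (Y : Matrix (Fin N) (Fin N) ℝ)
    (S : Matrix (Fin p) (Fin p) ℝ) (A₁ A : Matrix (Fin N) (Fin p) ℝ) :
    frobNorm (Y - A₁ * S * Aᵀ) ^ 2
      = trace (Yᵀ * Y) + 2 * traceQuadratic (Sᵀ * A₁ᵀ * A₁ * S) (Yᵀ * A₁ * S) A := by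
  have hcross : trace (Yᵀ * (A₁ * S * Aᵀ)) = trace (Aᵀ * (Yᵀ * A₁ * S)) := by
    rw [show Yᵀ * (A₁ * S * Aᵀ) = Yᵀ * A₁ * S * Aᵀ by simp only [Matrix.mul_assoc],
      trace_mul_comm]
  have hquad : trace ((A₁ * S * Aᵀ)ᵀ * (A₁ * S * Aᵀ)) = trace (Aᵀ * A * (Sᵀ * A₁ᵀ * A₁ * S)) := by
    rw [show (A₁ * S * Aᵀ)ᵀ * (A₁ * S * Aᵀ) = A * (Sᵀ * A₁ᵀ * A₁ * S * Aᵀ) by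
        simp only [transpose_mul, transpose_transpose, Matrix.mul_assoc],
      trace_mul_comm, Matrix.mul_assoc, trace_mul_comm]
  rw [frobNorm_sq, traceQuadratic]
  simp only [transpose_sub, Matrix.sub_mul, Matrix.mul_sub, trace_sub]
  rw [trace_transpose_mul_comm (A₁ * S * Aᵀ), hcross, hquad]
  ring

lemma frobNorm_sq_sub {N p : ℕ} (A₁ A : Matrix (Fin N) (Fin p) ℝ) :
    frobNorm (A₁ - A) ^ 2 = trace (A₁ᵀ * A₁) + 2 * traceQuadratic 1 A₁ A := by
  rw [frobNorm_sq, traceQuadratic]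
  simp only [transpose_sub, Matrix.sub_mul, Matrix.mul_sub, trace_sub, Matrix.mul_one]
  rw [trace_transpose_mul_comm A₁ A]
  ring

lemma frobNorm_sq_eq_traceQuadratic {N p : ℕ} (A : Matrix (Fin N) (Fin p) ℝ) :
    frobNorm A ^ 2 = 2 * traceQuadratic 1 0 A := by
  simp [frobNorm_sq, traceQuadratic]

lemma alsObjA₂_eq_add_traceQuadratic {N p K : ℕ}
    (X : Fin K → Matrix (Fin N) (Fin N) ℝ) (R : Fin K → Matrix (Fin p) (Fin p) ℝ)
    (A₁ : Matrix (Fin N) (Fin p) ℝ) (lamA lamE ρ : ℝ) (A : Matrix (Fin N) (Fin p) ℝ) :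
    alsObjA₂ X R A₁ lamA lamE ρ A
      = ((1 / 2) * ∑ k, trace ((X k)ᵀ * X k) + (1 / 2) * lamE * trace (A₁ᵀ * A₁))
        + traceQuadratic (∑ k, (R k)ᵀ * A₁ᵀ * A₁ * R k + (lamA + lamE + 2 / ρ) • 1)
            (∑ k, (X k)ᵀ * A₁ * R k + lamE • A₁) A := by
  simp only [alsObjA₂, frobNorm_sq_sub_mul_transpose]
  rw [frobNorm_sq_sub A₁ A, frobNorm_sq_eq_traceQuadratic A]
  simp only [traceQuadratic, Finset.sum_add_distrib, Matrix.mul_add, Matrix.mul_sum, trace_add,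
    trace_sum, Matrix.mul_smul, trace_smul, smul_eq_mul, Matrix.mul_one, Matrix.mul_zero,
    trace_zero]
  rw [← Finset.mul_sum, Finset.sum_sub_distrib, ← Finset.mul_sum]
  ring

/-- Normal equation for the `A₂` update: `H = Σ_k R_kᵀ A₁ᵀ A₁ R_k + (λ_A + λ_e + 2/ρ) I`
is positive definite and `A₂* = (Σ_k X_kᵀ A₁ R_k + λ_e A₁) H⁻¹` is the unique global
minimizer of the ALS subproblem objective. -/
theorem alsObjA₂_normal_equation {N p K : ℕ}
    (X : Fin K → Matrix (Fin N) (Fin N) ℝ) (R : Fin K → Matrix (Fin p) (Fin p) ℝ)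
    (A₁ : Matrix (Fin N) (Fin p) ℝ) (lamA lamE ρ : ℝ)
    (hA : 0 ≤ lamA) (hE : 0 ≤ lamE) (hρ : 0 < ρ) :
    (∑ k, (R k)ᵀ * A₁ᵀ * A₁ * R k
        + (lamA + lamE + 2 / ρ) • (1 : Matrix (Fin p) (Fin p) ℝ)).PosDef ∧
    ∀ A : Matrix (Fin N) (Fin p) ℝ,
      A ≠ (∑ k, (X k)ᵀ * A₁ * R k + lamE • A₁)
            * (∑ k, (R k)ᵀ * A₁ᵀ * A₁ * R k
                + (lamA + lamE + 2 / ρ) • (1 : Matrix (Fin p) (Fin p) ℝ))⁻¹ →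
      alsObjA₂ X R A₁ lamA lamE ρ
          ((∑ k, (X k)ᵀ * A₁ * R k + lamE • A₁)
            * (∑ k, (R k)ᵀ * A₁ᵀ * A₁ * R k
                + (lamA + lamE + 2 / ρ) • (1 : Matrix (Fin p) (Fin p) ℝ))⁻¹)
        < alsObjA₂ X R A₁ lamA lamE ρ A := by
  have hH : (∑ k, (R k)ᵀ * A₁ᵀ * A₁ * R k
      + (lamA + lamE + 2 / ρ) • (1 : Matrix (Fin p) (Fin p) ℝ)).PosDef := by
    simpa only [transpose_mul, Matrix.mul_assoc] using
      posDef_sum_transpose_mul_self_add_smul_one (fun k => A₁ * R k) Finset.univ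
        (by positivity : 0 < lamA + lamE + 2 / ρ)
  refine ⟨hH, fun A hne => ?_⟩
  rw [alsObjA₂_eq_add_traceQuadratic, alsObjA₂_eq_add_traceQuadratic]
  exact (add_lt_add_iff_left _).mpr (traceQuadratic_lt_of_ne hH _ hne)
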